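/- arXiv:2206.05118 — 2 statements merged into one kernel-verified Lean document; each statement's English description precedes it below -/
import Mathlib

section
/- Let f be a set of natural numbers and d > 0 a real constant, and suppose there is a constant C₀ > 0 such that |π_f(x) − d·x/ln x| ≤ C₀·x/ln²x for all x ≥ 2. Then there is a constant C > 0 such that for all x ≥ 3: |∑_{p prime, p ≤ x, p ∈ f} 1/p − d·ln ln x| ≤ C. -/
open Filter

/-- `primeCountIn f t` is the number of primes `p ≤ t` with `p ∈ f`. -/
noncomputable def primeCountIn (f : Set ℕ) (t : ℝ) : ℕ :=
  {p : ℕ | p.Prime ∧ p ∈ f ∧ (p : ℝ) ≤ t}.ncard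

open scoped Classical in
/-- `primeSumIn f g x` is the sum of `g p` over primes `p ≤ x` with `p ∈ f`. -/
noncomputable def primeSumIn (f : Set ℕ) (g : ℝ → ℝ) (x : ℝ) : ℝ :=
  ∑ p ∈ (Finset.range (⌊x⌋₊ + 1)).filter (fun p => p.Prime ∧ p ∈ f), g p

/-!
Partial summation gives `∑_{p ≤ N} 1/p = π_f(N)/N + ∑_{n < N} π_f(n) (1/n - 1/(n+1))`.
Inserting `π_f(n) = d n / log n + O(n / log² n)`, the main term `d / ((n+1) log n)` differs from
the increment `d (log log (n+1) - log log n)` by at most `d (1/n - 1/(n+1))`, and the error term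
is at most `2 C₀ (1/log n - 1/log (n+1))`. Both bounds telescope, so the sum is
`d log log N + O(1)`; passing from `N = ⌊x⌋` to `x` moves `log log` by at most `1`.
-/

open Finset Real

namespace Real

lemma log_sub_log_le_div {a b : ℝ} (ha : 0 < a) (hb : 0 < b) :
    log b - log a ≤ (b - a) / a := by
  have h := log_le_sub_one_of_pos (div_pos hb ha)
  rwa [log_div hb.ne' ha.ne', div_sub_one ha.ne'] at h

lemma div_le_log_sub_log {a b : ℝ} (ha : 0 < a) (hb : 0 < b) :
    (b - a) / b ≤ log b - log a := by
  have h := log_le_sub_one_of_pos (div_pos ha hb)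
  rw [log_div ha.ne' hb.ne', div_sub_one hb.ne'] at h
  rw [← neg_sub b a, neg_div] at h
  linarith

lemma one_le_log_three : 1 ≤ log 3 := by
  rw [le_log_iff_exp_le (by norm_num)]
  linarith [exp_one_lt_d9]

end Real

section LogLogIncrement

-- `a` and `b` stand for `log n` and `log (n + 1)`.
variable {n a b : ℝ}

lemma abs_inv_mul_sub_log_sub_log_le (hn : 0 < n) (ha : 1 ≤ a)
    (hlow : 1 / (n + 1) ≤ b - a) (hup : b - a ≤ 1 / n) :
    |1 / ((n + 1) * a) - (log b - log a)| ≤ 1 / n - 1 / (n + 1) := by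
  have hb : 1 ≤ b := by linarith [show 0 < 1 / (n + 1) by positivity]
  have hw : 1 / n - 1 / (n + 1) = 1 / (n * (n + 1)) := by field_simp; ring
  have hupper := log_sub_log_le_div (by linarith : 0 < a) (by linarith : 0 < b)
  have hlower := div_le_log_sub_log (by linarith : 0 < a) (by linarith : 0 < b)
  have hab : 1 ≤ a * b := by nlinarith
  have hsub : log b - log a - 1 / ((n + 1) * a) ≤ 1 / (n * (n + 1)) := by
    calc log b - log a - 1 / ((n + 1) * a) ≤ (1 / n) / a - 1 / ((n + 1) * a) := by
          linarith [div_le_div_of_nonneg_right hup (by linarith : 0 ≤ a)]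
      _ = 1 / (n * (n + 1)) / a := by field_simp; ring
      _ ≤ 1 / (n * (n + 1)) := div_le_self (by positivity) ha
  have hadd : 1 / ((n + 1) * a) - (log b - log a) ≤ 1 / (n * (n + 1)) := by
    calc 1 / ((n + 1) * a) - (log b - log a) ≤ 1 / ((n + 1) * a) - 1 / (n + 1) / b := by
          linarith [div_le_div_of_nonneg_right hlow (by linarith : 0 ≤ b)]
      _ = (b - a) / ((n + 1) * (a * b)) := by field_simp
      _ ≤ (1 / n) / ((n + 1) * 1) := by gcongr
      _ = 1 / (n * (n + 1)) := by rw [mul_one, div_div]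
  rw [hw, abs_le]
  constructor <;> linarith

lemma inv_mul_sq_le_two_mul_inv_sub_inv (hn : 1 ≤ n) (ha : 1 ≤ a)
    (hlow : 1 / (n + 1) ≤ b - a) (hup : b - a ≤ 1 / n) :
    1 / ((n + 1) * a ^ 2) ≤ 2 * (1 / a - 1 / b) := by
  have hb : b ≤ 2 * a := by linarith [(div_le_one (by linarith : 0 < n)).mpr hn]
  have hba : 0 < b - a := lt_of_lt_of_le (by positivity) hlow
  have hb0 : 0 < b := by linarith
  calc 1 / ((n + 1) * a ^ 2) = 2 * (1 / (n + 1) / (a * (2 * a))) := by field_simp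
    _ ≤ 2 * ((b - a) / (a * b)) := by gcongr
    _ = 2 * (1 / a - 1 / b) := by field_simp

lemma abs_mul_sub_mul_log_sub_log_le {A d C₀ : ℝ} (hd : 0 ≤ d) (hC₀ : 0 ≤ C₀)
    (hn : 1 ≤ n) (ha : 1 ≤ a) (hlow : 1 / (n + 1) ≤ b - a) (hup : b - a ≤ 1 / n)
    (hA : |A - d * n / a| ≤ C₀ * n / a ^ 2) :
    |A * (1 / n - 1 / (n + 1)) - d * (log b - log a)|
      ≤ d * (1 / n - 1 / (n + 1)) + 2 * C₀ * (1 / a - 1 / b) := by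
  have hn0 : 0 < n := by linarith
  have hw : 1 / n - 1 / (n + 1) = 1 / (n * (n + 1)) := by field_simp; ring
  have hsplit : A * (1 / n - 1 / (n + 1)) - d * (log b - log a)
      = (A - d * n / a) * (1 / n - 1 / (n + 1)) + d * (1 / ((n + 1) * a) - (log b - log a)) := by
    rw [hw]; field_simp; ring
  rw [hsplit]
  calc _ ≤ |A - d * n / a| * (1 / n - 1 / (n + 1))
        + d * |1 / ((n + 1) * a) - (log b - log a)| := by
        refine (abs_add_le _ _).trans ?_
        rw [abs_mul, abs_mul, abs_of_nonneg hd,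
          abs_of_nonneg (a := 1 / n - 1 / (n + 1)) (by rw [hw]; positivity)]
    _ ≤ C₀ * n / a ^ 2 * (1 / (n * (n + 1))) + d * (1 / n - 1 / (n + 1)) := by
        rw [← hw]
        gcongr
        · rw [hw]; positivity
        · exact abs_inv_mul_sub_log_sub_log_le hn0 ha hlow hup
    _ = C₀ * (1 / ((n + 1) * a ^ 2)) + d * (1 / n - 1 / (n + 1)) := by field_simp
    _ ≤ C₀ * (2 * (1 / a - 1 / b)) + d * (1 / n - 1 / (n + 1)) := by
        gcongr; exact inv_mul_sq_le_two_mul_inv_sub_inv hn ha hlow hup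
    _ = _ := by ring

end LogLogIncrement

lemma Finset.abs_sum_Ico_sub_sub_le {x F G : ℕ → ℝ} {m N : ℕ} (hmN : m ≤ N)
    (h : ∀ n ∈ Ico m N, |x n - (F (n + 1) - F n)| ≤ G (n + 1) - G n) :
    |∑ n ∈ Ico m N, x n - (F N - F m)| ≤ G N - G m := by
  rw [← sum_Ico_sub F hmN, ← sum_Ico_sub G hmN, ← sum_sub_distrib]
  exact (abs_sum_le_sum_abs _ _).trans (sum_le_sum h)

open scoped Classical in
lemma primeCountIn_natCast (f : Set ℕ) (n : ℕ) :
    (primeCountIn f n : ℝ) = ∑ k ∈ range (n + 1), if k.Prime ∧ k ∈ f then (1 : ℝ) else 0 := by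
  have hset : {p : ℕ | p.Prime ∧ p ∈ f ∧ (p : ℝ) ≤ n}
      = ((range (n + 1)).filter (fun p => p.Prime ∧ p ∈ f) : Set ℕ) := by
    ext p
    simp only [Set.mem_ofPred_eq, coe_filter, mem_range, Nat.lt_succ_iff, Nat.cast_le]
    tauto
  rw [primeCountIn, hset, Set.ncard_coe_finset, sum_boole]

lemma primeCountIn_natCast_le (f : Set ℕ) (n : ℕ) : primeCountIn f n ≤ n := by
  have hsub : {p : ℕ | p.Prime ∧ p ∈ f ∧ (p : ℝ) ≤ n} ⊆ (Icc 1 n : Set ℕ) := by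
    rintro p ⟨hp, -, hpn⟩
    exact mem_Icc.mpr ⟨hp.one_le, by exact_mod_cast hpn⟩
  calc primeCountIn f n ≤ (Icc 1 n : Set ℕ).ncard :=
        Set.ncard_le_ncard hsub (Icc 1 n).finite_toSet
    _ = n := by rw [Set.ncard_coe_finset, Nat.card_Icc, Nat.add_sub_cancel]

open scoped Classical in
lemma primeSumIn_inv_natCast (f : Set ℕ) (N : ℕ) :
    primeSumIn f (fun t => 1 / t) N
      = primeCountIn f N / N
        + ∑ n ∈ range N, (primeCountIn f n : ℝ) * (1 / (n : ℝ) - 1 / ((n : ℝ) + 1)) := by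
  have hparts := sum_range_by_parts (fun k : ℕ => 1 / (k : ℝ))
    (fun k => if k.Prime ∧ k ∈ f then (1 : ℝ) else 0) (N + 1)
  simp only [← primeCountIn_natCast, smul_eq_mul, Nat.add_sub_cancel, mul_ite, mul_one,
    mul_zero] at hparts
  rw [primeSumIn, Nat.floor_natCast, sum_filter, hparts, sub_eq_add_neg, ← sum_neg_distrib]
  congr 1
  · ring
  · refine sum_congr rfl fun n _ => ?_
    push_cast
    ring

lemma abs_sum_Ico_mul_inv_sub_inv_sub_loglog_le {A : ℕ → ℝ} {d C₀ : ℝ} (hd : 0 ≤ d)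
    (hC₀ : 0 ≤ C₀) (hA : ∀ n : ℕ, 3 ≤ n → |A n - d * n / log n| ≤ C₀ * n / log n ^ 2)
    {N : ℕ} (hN : 3 ≤ N) :
    |∑ n ∈ Ico 3 N, A n * (1 / (n : ℝ) - 1 / ((n : ℝ) + 1))
        - (d * log (log N) - d * log (log 3))| ≤ d / 3 + 2 * C₀ := by
  have hlog_ge : ∀ {t : ℝ}, 3 ≤ t → 1 ≤ log t := fun ht =>
    one_le_log_three.trans (log_le_log (by norm_num) ht)
  have hterm : ∀ n ∈ Ico 3 N, |A n * (1 / (n : ℝ) - 1 / ((n : ℝ) + 1))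
      - (d * log (log ((n + 1 : ℕ) : ℝ)) - d * log (log (n : ℝ)))|
      ≤ (-d / ((n + 1 : ℕ) : ℝ) - 2 * C₀ / log ((n + 1 : ℕ) : ℝ))
        - (-d / (n : ℝ) - 2 * C₀ / log (n : ℝ)) := by
    intro n hn
    have hn3 : (3 : ℝ) ≤ n := by exact_mod_cast (mem_Ico.mp hn).1
    have hn0 : (0 : ℝ) < n := by linarith
    have h := abs_mul_sub_mul_log_sub_log_le hd hC₀ (by linarith) (hlog_ge hn3)
      (by simpa using div_le_log_sub_log hn0 (by linarith : (0 : ℝ) < n + 1))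
      (by simpa using log_sub_log_le_div hn0 (by linarith : (0 : ℝ) < n + 1))
      (hA n (mem_Ico.mp hn).1)
    push_cast
    rw [← mul_sub]
    exact h.trans_eq (by ring)
  have htel := abs_sum_Ico_sub_sub_le (F := fun m : ℕ => d * log (log (m : ℝ)))
    (G := fun m : ℕ => -d / (m : ℝ) - 2 * C₀ / log (m : ℝ)) hN hterm
  push_cast at htel
  refine htel.trans ?_
  have hN3 : (3 : ℝ) ≤ N := by exact_mod_cast hN
  have hGN : -d / (N : ℝ) - 2 * C₀ / log N ≤ 0 := by
    have := hlog_ge hN3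
    have : 0 ≤ d / N := by positivity
    have : 0 ≤ 2 * C₀ / log N := div_nonneg (by positivity) (by linarith)
    rw [neg_div]
    linarith
  have hG3 : 2 * C₀ / log 3 ≤ 2 * C₀ := div_le_self (by positivity) one_le_log_three
  linarith

lemma abs_primeSumIn_inv_natCast_sub_loglog_le {f : Set ℕ} {d C₀ : ℝ} (hd : 0 ≤ d)
    (hC₀ : 0 ≤ C₀)
    (hpi : ∀ n : ℕ, 3 ≤ n → |(primeCountIn f n : ℝ) - d * n / log n| ≤ C₀ * n / log n ^ 2)
    {N : ℕ} (hN : 3 ≤ N) :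
    |primeSumIn f (fun t => 1 / t) N - d * log (log N)| ≤ 2 + 2 * d + 2 * C₀ := by
  have hcount (n : ℕ) : (primeCountIn f n : ℝ) ≤ n := by exact_mod_cast primeCountIn_natCast_le f n
  have hhead : 0 ≤ (primeCountIn f N : ℝ) / N ∧ (primeCountIn f N : ℝ) / N ≤ 1 :=
    ⟨by positivity, div_le_one_of_le₀ (hcount N) (Nat.cast_nonneg N)⟩
  have hsmall : 0 ≤ ∑ n ∈ range 3, (primeCountIn f n : ℝ) * (1 / (n : ℝ) - 1 / ((n : ℝ) + 1))
      ∧ ∑ n ∈ range 3, (primeCountIn f n : ℝ) * (1 / (n : ℝ) - 1 / ((n : ℝ) + 1)) ≤ 1 := by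
    have h0 : (primeCountIn f 0 : ℝ) ≤ 0 := by exact_mod_cast hcount 0
    have h1 : (primeCountIn f 1 : ℝ) ≤ 1 := by exact_mod_cast hcount 1
    have h2 : (primeCountIn f 2 : ℝ) ≤ 2 := by exact_mod_cast hcount 2
    have : (0 : ℝ) ≤ primeCountIn f 0 := by positivity
    have : (0 : ℝ) ≤ primeCountIn f 1 := by positivity
    have : (0 : ℝ) ≤ primeCountIn f 2 := by positivity
    norm_num [sum_range_succ]
    constructor <;> linarith
  have hloglog3 : 0 ≤ log (log 3) ∧ log (log 3) ≤ 1 := by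
    refine ⟨log_nonneg one_le_log_three, ?_⟩
    have h3 := log_le_sub_one_of_pos (by norm_num : (0 : ℝ) < 3)
    have := log_le_sub_one_of_pos (by linarith [one_le_log_three] : 0 < log 3)
    linarith
  have hmain := abs_sum_Ico_mul_inv_sub_inv_sub_loglog_le hd hC₀ hpi hN
  have := mul_nonneg hd hloglog3.1
  have := mul_le_mul_of_nonneg_left hloglog3.2 hd
  rw [primeSumIn_inv_natCast, ← sum_range_add_sum_Ico _ hN]
  rw [abs_le] at hmain ⊢
  constructor <;> linarith

lemma primeSumIn_natFloor (f : Set ℕ) (g : ℝ → ℝ) (x : ℝ) :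
    primeSumIn f g ⌊x⌋₊ = primeSumIn f g x := by
  rw [primeSumIn, primeSumIn, Nat.floor_natCast]

lemma log_log_sub_log_log_natFloor_mem {x : ℝ} (hx : 3 ≤ x) :
    0 ≤ log (log x) - log (log ⌊x⌋₊) ∧ log (log x) - log (log ⌊x⌋₊) ≤ 1 := by
  have hN3 : (3 : ℝ) ≤ ⌊x⌋₊ := by exact_mod_cast Nat.le_floor (by exact_mod_cast hx)
  have hNx : (⌊x⌋₊ : ℝ) ≤ x := Nat.floor_le (by linarith)
  have hxN : x < ⌊x⌋₊ + 1 := Nat.lt_floor_add_one x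
  have hlogN : 1 ≤ log ⌊x⌋₊ := one_le_log_three.trans (log_le_log (by norm_num) hN3)
  have hlogNx : log ⌊x⌋₊ ≤ log x := log_le_log (by linarith) hNx
  refine ⟨sub_nonneg.mpr (log_le_log (by linarith) hlogNx), ?_⟩
  calc log (log x) - log (log ⌊x⌋₊) ≤ (log x - log ⌊x⌋₊) / log ⌊x⌋₊ :=
        log_sub_log_le_div (by linarith) (by linarith)
    _ ≤ log x - log ⌊x⌋₊ := div_le_self (by linarith) hlogN
    _ ≤ (x - ⌊x⌋₊) / ⌊x⌋₊ := log_sub_log_le_div (by linarith) (by linarith)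
    _ ≤ 1 := by rw [div_le_one (by linarith)]; linarith

theorem stmt6 (f : Set ℕ) (d : ℝ) (hd : 0 < d) (C₀ : ℝ) (hC₀ : 0 < C₀)
    (hpi : ∀ x : ℝ, 2 ≤ x →
      |(primeCountIn f x : ℝ) - d * x / Real.log x| ≤ C₀ * x / (Real.log x) ^ 2) :
    ∃ C : ℝ, 0 < C ∧ ∀ x : ℝ, 3 ≤ x →
      |primeSumIn f (fun t => 1 / t) x - d * Real.log (Real.log x)| ≤ C := by
  refine ⟨2 + 3 * d + 2 * C₀, by positivity, fun x hx => ?_⟩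
  have hsum := abs_primeSumIn_inv_natCast_sub_loglog_le hd.le hC₀.le
    (fun n hn => hpi n (by norm_cast; omega)) (Nat.le_floor (by exact_mod_cast hx))
  obtain ⟨hlow, hup⟩ := log_log_sub_log_log_natFloor_mem hx
  rw [primeSumIn_natFloor, abs_le] at hsum
  have := mul_nonneg hd.le hlow
  have := mul_le_mul_of_nonneg_left hup hd.le
  rw [abs_le]
  constructor <;> linarith
end

section
/- Let f be a set of natural numbers, d ≠ 0 a real constant, c > 0, and suppose there is a constant C₀ > 0 such that |π_f(x) − d·∫_2^x dt/ln t| ≤ C₀·x·exp(−c·√(ln x)) for all x ≥ 2. Let g : ℝ → ℝ be monotone with a continuous derivative on [2, ∞). Then there is a constant C > 0 such that for all x ≥ 2: |∑_{p prime, p ≤ x, p ∈ f} g(p) − d·∫_2^x g(t)/ln t dt| ≤ C·( |g(x)|·x·exp(−c·√(ln x)) + ∫_2^x t·|g'(t)|·exp(−c·√(ln t)) dt ). -/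
/-!
Write `E(t) = π_f(t) - d·∫_2^t du / log u` for the error term of the hypothesis. Abel summation
expresses the prime sum as `g(x) π_f(x) - ∫_2^x g'(t) π_f(t) dt`, and integration by parts
expresses `∫_2^x g(t) / log t dt` in the same shape with `π_f` replaced by the logarithmic
integral. Subtracting, the difference to be estimated is `g(x) E(x) - ∫_2^x g'(t) E(t) dt`, and
the pointwise bound on `E` gives the claim with `C = C₀`.
-/

open Filter

open Finset MeasureTheory intervalIntegral

lemma integral_mul_eq_sub_integral_mul_primitive {g g' q : ℝ → ℝ} {a x : ℝ} (hax : a ≤ x)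
    (hderiv : ∀ t ∈ Set.Icc a x, HasDerivAt g (g' t) t) (hg' : IntervalIntegrable g' volume a x)
    (hq : ContinuousOn q (Set.Icc a x)) :
    ∫ t in a..x, g t * q t =
      g x * (∫ t in a..x, q t) - ∫ t in a..x, g' t * ∫ s in a..t, q s := by
  have hIcc : Set.uIcc a x = Set.Icc a x := Set.uIcc_of_le hax
  have hprim : ∀ t ∈ Set.Ioo a x, HasDerivAt (fun y => ∫ s in a..y, q s) (q t) t :=
    fun t ht => integral_hasDerivAt_right
      ((hq.mono (Set.Icc_subset_Icc_right ht.2.le)).intervalIntegrable_of_Icc ht.1.le)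
      ((hq.mono Set.Ioo_subset_Icc_self).stronglyMeasurableAtFilter isOpen_Ioo t ht)
      (hq.continuousAt (Icc_mem_nhds ht.1 ht.2))
  have hparts := integral_mul_deriv_eq_deriv_mul_of_hasDerivAt
    (fun t ht => (hderiv t (hIcc ▸ ht)).continuousAt.continuousWithinAt)
    (continuousOn_primitive_interval (hIcc ▸ hq.integrableOn_Icc))
    (fun t ht => hderiv t (Set.Ioo_subset_Icc_self (by simpa [hax] using ht)))
    (fun t ht => hprim t (by simpa [hax] using ht)) hg' (hq.intervalIntegrable_of_Icc hax)
  simpa using hparts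

lemma abs_mul_sub_integral_le {g g' E B : ℝ → ℝ} {a x K : ℝ} (hax : a ≤ x)
    (hE : ∀ t ∈ Set.Icc a x, |E t| ≤ K * B t)
    (hgE : IntervalIntegrable (fun t => g' t * E t) volume a x)
    (hgB : IntervalIntegrable (fun t => |g' t| * B t) volume a x) :
    |g x * E x - ∫ t in a..x, g' t * E t| ≤
      K * (|g x| * B x + ∫ t in a..x, |g' t| * B t) := by
  have hx : |g x * E x| ≤ K * (|g x| * B x) := by
    rw [abs_mul]
    nlinarith [mul_le_mul_of_nonneg_left (hE x ⟨hax, le_rfl⟩) (abs_nonneg (g x))]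
  have hint : |∫ t in a..x, g' t * E t| ≤ K * ∫ t in a..x, |g' t| * B t := by
    rw [← intervalIntegral.integral_const_mul]
    refine (abs_integral_le_integral_abs hax).trans
      (integral_mono_on hax hgE.abs (hgB.const_mul K) fun t ht => ?_)
    rw [abs_mul]
    nlinarith [mul_le_mul_of_nonneg_left (hE t ht) (abs_nonneg (g' t))]
  calc _ ≤ |g x * E x| + |∫ t in a..x, g' t * E t| := abs_sub _ _
    _ ≤ _ := by linarith

lemma continuousOn_one_div_log : ContinuousOn (fun t : ℝ => 1 / Real.log t) (Set.Ioi 1) :=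
  continuousOn_const.div (Real.continuousOn_log.mono fun _ ht => (zero_lt_one.trans ht).ne')
    fun _ ht => (Real.log_pos ht).ne'

lemma continuousOn_Icc_one_div_log {x : ℝ} :
    ContinuousOn (fun t : ℝ => 1 / Real.log t) (Set.Icc 2 x) :=
  continuousOn_one_div_log.mono fun _ ht => one_lt_two.trans_le ht.1

open scoped Classical in
noncomputable def primeIndicator (f : Set ℕ) (n : ℕ) : ℝ :=
  if n.Prime ∧ n ∈ f then 1 else 0

lemma primeCountIn_eq_sum_primeIndicator (f : Set ℕ) {t : ℝ} (ht : 0 ≤ t) :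
    (primeCountIn f t : ℝ) = ∑ k ∈ Icc 0 ⌊t⌋₊, primeIndicator f k := by
  classical
  simp only [primeIndicator]
  rw [sum_boole, primeCountIn, ← Set.ncard_coe_finset]
  congr 2
  ext p
  simp only [coe_filter, mem_Icc, Set.mem_ofPred_eq, Nat.le_floor_iff ht, Nat.zero_le, true_and]
  tauto

lemma primeSumIn_eq_sum_mul_primeIndicator (f : Set ℕ) (g : ℝ → ℝ) (x : ℝ) :
    primeSumIn f g x = ∑ k ∈ Icc 0 ⌊x⌋₊, g k * primeIndicator f k := by
  classical
  rw [primeSumIn, sum_filter, Nat.range_succ_eq_Icc_zero]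
  simp only [primeIndicator, mul_ite, mul_one, mul_zero]

lemma monotone_primeCountIn (f : Set ℕ) : Monotone (fun t => (primeCountIn f t : ℝ)) := by
  intro s t hst
  refine Nat.cast_le.mpr
    (Set.ncard_le_ncard (fun p ⟨hp, hpf, hps⟩ => ⟨hp, hpf, hps.trans hst⟩) ?_)
  refine (Set.finite_Iic ⌊t⌋₊).subset fun p ⟨_, _, hpt⟩ => ?_
  exact Nat.le_floor hpt

lemma primeSumIn_eq_sub_integral {f : Set ℕ} {g g' : ℝ → ℝ} {x : ℝ} (hx : 2 ≤ x)
    (hderiv : ∀ t ∈ Set.Icc 2 x, HasDerivAt g (g' t) t)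
    (hcont : ContinuousOn g' (Set.Icc 2 x)) :
    primeSumIn f g x =
      g x * primeCountIn f x - ∫ t in (2 : ℝ)..x, g' t * primeCountIn f t := by
  have hint : IntegrableOn (deriv g) (Set.Icc 2 x) :=
    hcont.integrableOn_Icc.congr_fun (fun t ht => (hderiv t ht).deriv.symm) measurableSet_Icc
  rw [primeSumIn_eq_sum_mul_primeIndicator, primeCountIn_eq_sum_primeIndicator f (by linarith),
    sum_mul_eq_sub_integral_mul₁ _ (by simp [primeIndicator, Nat.not_prime_zero])
      (by simp [primeIndicator, Nat.not_prime_one]) x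
      (fun t ht => (hderiv t ht).differentiableAt) hint,
    integral_of_le hx]
  congr 1
  refine setIntegral_congr_fun measurableSet_Ioc fun t ht => ?_
  rw [(hderiv t (Set.Ioc_subset_Icc_self ht)).deriv,
    primeCountIn_eq_sum_primeIndicator f (by linarith [ht.1])]

noncomputable def primeCountError (f : Set ℕ) (d t : ℝ) : ℝ :=
  primeCountIn f t - d * ∫ s in (2 : ℝ)..t, 1 / Real.log s

section ErrorTerm

variable {f : Set ℕ} {d x : ℝ} {g g' : ℝ → ℝ}

lemma intervalIntegrable_mul_primeCountIn (hx : 2 ≤ x) (hcont : ContinuousOn g' (Set.Icc 2 x)) :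
    IntervalIntegrable (fun t => g' t * primeCountIn f t) volume 2 x :=
  (monotone_primeCountIn f).intervalIntegrable.continuousOn_mul (hcont.mono (Set.uIcc_of_le hx).le)

lemma intervalIntegrable_mul_integral_one_div_log (hx : 2 ≤ x)
    (hcont : ContinuousOn g' (Set.Icc 2 x)) :
    IntervalIntegrable (fun t => g' t * ∫ s in (2 : ℝ)..t, 1 / Real.log s) volume 2 x := by
  refine ContinuousOn.intervalIntegrable_of_Icc hx (hcont.mul ?_)
  rw [← Set.uIcc_of_le hx]
  exact continuousOn_primitive_interval
    ((Set.uIcc_of_le hx).symm ▸ continuousOn_Icc_one_div_log.integrableOn_Icc)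

lemma intervalIntegrable_mul_primeCountError (hx : 2 ≤ x)
    (hcont : ContinuousOn g' (Set.Icc 2 x)) :
    IntervalIntegrable (fun t => g' t * primeCountError f d t) volume 2 x := by
  simp only [primeCountError, mul_sub]
  exact (intervalIntegrable_mul_primeCountIn hx hcont).sub
    (by simpa only [mul_left_comm] using
      (intervalIntegrable_mul_integral_one_div_log hx hcont).const_mul d)

lemma primeSumIn_sub_integral_div_log_eq (hx : 2 ≤ x)
    (hderiv : ∀ t ∈ Set.Icc 2 x, HasDerivAt g (g' t) t)
    (hcont : ContinuousOn g' (Set.Icc 2 x)) :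
    primeSumIn f g x - d * ∫ t in (2 : ℝ)..x, g t / Real.log t =
      g x * primeCountError f d x - ∫ t in (2 : ℝ)..x, g' t * primeCountError f d t := by
  have hparts := integral_mul_eq_sub_integral_mul_primitive hx hderiv
    (hcont.intervalIntegrable_of_Icc hx) continuousOn_Icc_one_div_log
  simp only [mul_one_div] at hparts
  have hsplit : ∫ t in (2 : ℝ)..x, g' t * primeCountError f d t =
      (∫ t in (2 : ℝ)..x, g' t * primeCountIn f t) -
        d * ∫ t in (2 : ℝ)..x, g' t * ∫ s in (2 : ℝ)..t, 1 / Real.log s := by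
    rw [← intervalIntegral.integral_const_mul,
      ← integral_sub (intervalIntegrable_mul_primeCountIn hx hcont)
        ((intervalIntegrable_mul_integral_one_div_log hx hcont).const_mul d)]
    refine integral_congr fun t _ => ?_
    simp only [primeCountError]
    ring
  rw [hsplit, hparts, primeSumIn_eq_sub_integral hx hderiv hcont, primeCountError]
  ring

end ErrorTerm

theorem stmt7_general (f : Set ℕ) (d : ℝ) (c : ℝ)
    (C₀ : ℝ) (hC₀ : 0 < C₀)
    (hpi : ∀ x : ℝ, 2 ≤ x →
      |(primeCountIn f x : ℝ) - d * ∫ t in (2 : ℝ)..x, 1 / Real.log t| ≤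
        C₀ * x * Real.exp (-c * Real.sqrt (Real.log x)))
    (g g' : ℝ → ℝ)
    (hderiv : ∀ t ∈ Set.Ici (2 : ℝ), HasDerivAt g (g' t) t)
    (hcont : ContinuousOn g' (Set.Ici (2 : ℝ))) :
    ∃ C : ℝ, 0 < C ∧ ∀ x : ℝ, 2 ≤ x →
      |primeSumIn f g x - d * ∫ t in (2 : ℝ)..x, g t / Real.log t| ≤
        C * (|g x| * x * Real.exp (-c * Real.sqrt (Real.log x)) +
          ∫ t in (2 : ℝ)..x, t * |g' t| * Real.exp (-c * Real.sqrt (Real.log t))) := by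
  refine ⟨C₀, hC₀, fun x hx => ?_⟩
  have hderiv' : ∀ t ∈ Set.Icc 2 x, HasDerivAt g (g' t) t := fun t ht => hderiv t ht.1
  have hcont' : ContinuousOn g' (Set.Icc 2 x) := hcont.mono Set.Icc_subset_Ici_self
  set B : ℝ → ℝ := fun t => t * Real.exp (-c * Real.sqrt (Real.log t))
  have hB : ContinuousOn B (Set.Icc 2 x) := by
    refine continuousOn_id.mul (Real.continuous_exp.comp_continuousOn
      (continuousOn_const.mul (Real.continuous_sqrt.comp_continuousOn
        (Real.continuousOn_log.mono fun t ht => ?_))))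
    exact (zero_lt_two.trans_le ht.1).ne'
  have hbound := abs_mul_sub_integral_le (g := g) (E := primeCountError f d) hx
    (fun t ht => (hpi t ht.1).trans_eq (mul_assoc _ _ _))
    (intervalIntegrable_mul_primeCountError hx hcont')
    ((hcont'.abs.mul hB).intervalIntegrable_of_Icc hx)
  rw [primeSumIn_sub_integral_div_log_eq hx hderiv' hcont']
  convert hbound using 3
  · ring
  · refine integral_congr fun t _ => ?_
    ring

theorem stmt7 (f : Set ℕ) (d : ℝ) (hd : d ≠ 0) (c : ℝ) (hc : 0 < c)
    (C₀ : ℝ) (hC₀ : 0 < C₀)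
    (hpi : ∀ x : ℝ, 2 ≤ x →
      |(primeCountIn f x : ℝ) - d * ∫ t in (2 : ℝ)..x, 1 / Real.log t| ≤
        C₀ * x * Real.exp (-c * Real.sqrt (Real.log x)))
    (g g' : ℝ → ℝ)
    (hmono : MonotoneOn g (Set.Ici (2 : ℝ)) ∨ AntitoneOn g (Set.Ici (2 : ℝ)))
    (hderiv : ∀ t ∈ Set.Ici (2 : ℝ), HasDerivAt g (g' t) t)
    (hcont : ContinuousOn g' (Set.Ici (2 : ℝ))) :
    ∃ C : ℝ, 0 < C ∧ ∀ x : ℝ, 2 ≤ x →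
      |primeSumIn f g x - d * ∫ t in (2 : ℝ)..x, g t / Real.log t| ≤
        C * (|g x| * x * Real.exp (-c * Real.sqrt (Real.log x)) +
          ∫ t in (2 : ℝ)..x, t * |g' t| * Real.exp (-c * Real.sqrt (Real.log t))) :=
  stmt7_general f d c C₀ hC₀ hpi g g' hderiv hcont
end
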